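/- Let f : ℝ^d → ℝ be differentiable and L-gradient Lipschitz with L ≥ 0, bounded below by f_* (i.e., f(x) ≥ f_* for all x). Let η > 0 with ηL ≤ 1, let r ≥ 0 and N ≥ 1. Let x_0, …, x_N ∈ ℝ^d and v_0, …, v_{N−1}, ξ_0, …, ξ_{N−1} ∈ ℝ^d satisfy x_{i+1} = x_i − η(v_i − ξ_i) and ‖ξ_i‖ ≤ r for every 0 ≤ i < N. Then (1/N) ∑_{i=0}^{N−1} ‖∇f(x_i)‖² ≤ 2(f(x_0) − f_*)/(ηN) + (2/N) ∑_{i=0}^{N−1} ‖v_i − ∇f(x_i)‖² + 2r²; in particular there exists 0 ≤ i < N with ‖∇f(x_i)‖² bounded by this right-hand side. -/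

import Mathlib

/-!
Along the segment from `x` to `y`, the Lipschitz bound on `∇f` gives the descent lemma
`f y ≤ f x + ⟪∇f x, y - x⟫ + L/2 ‖y - x‖²`. For the step `y = x - η u` with `u = v - ξ` and
`ηL ≤ 1` it yields `f y ≤ f x + η/2 ‖u - ∇f x‖² - η/2 ‖∇f x‖²`, and
`‖u - ∇f x‖² ≤ 2‖v - ∇f x‖² + 2r²`. Summing over the steps telescopes `f`, which is bounded
below by `f_*`; dividing by `ηN/2` gives the average bound, and some term is at most the average.
-/

open InnerProductSpace Finset

section Descent

variable {E : Type*} [NormedAddCommGroup E] [InnerProductSpace ℝ E] [CompleteSpace E]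
  {f : E → ℝ} {L : ℝ}

theorem Differentiable.hasDerivAt_comp_add_smul (hf : Differentiable ℝ f) (x u : E) (t : ℝ) :
    HasDerivAt (fun s : ℝ => f (x + s • u)) ⟪gradient f (x + t • u), u⟫_ℝ t := by
  have hline : HasDerivAt (fun s : ℝ => x + s • u) u t := by
    simpa using ((hasDerivAt_id t).smul_const u).const_add x
  exact (hf _).hasGradientAt.hasFDerivAt.comp_hasDerivAt t hline

theorem le_add_inner_gradient_add_half_mul_sq (hf : Differentiable ℝ f)
    (hlip : ∀ x y : E, ‖gradient f x - gradient f y‖ ≤ L * ‖x - y‖) (x y : E) :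
    f y ≤ f x + ⟪gradient f x, y - x⟫_ℝ + L / 2 * ‖y - x‖ ^ 2 := by
  set u := y - x
  let φ : ℝ → ℝ := fun t => L / 2 * ‖u‖ ^ 2 * t ^ 2 - f (x + t • u) + ⟪gradient f x, u⟫_ℝ * t
  let φ' : ℝ → ℝ := fun t =>
    L * ‖u‖ ^ 2 * t - ⟪gradient f (x + t • u) - gradient f x, u⟫_ℝ
  have hφ : ∀ t, HasDerivAt φ (φ' t) t := by
    intro t
    have hsum := (((hasDerivAt_pow 2 t).const_mul (L / 2 * ‖u‖ ^ 2)).sub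
      (hf.hasDerivAt_comp_add_smul x u t)).add
      ((hasDerivAt_id t).const_mul ⟪gradient f x, u⟫_ℝ)
    refine hsum.congr_deriv ?_
    simp only [φ', inner_sub_left]
    push_cast
    ring
  have hφ'_nonneg : ∀ t ∈ interior (Set.Ici (0 : ℝ)), 0 ≤ φ' t := by
    intro t ht
    rw [interior_Ici, Set.mem_Ioi] at ht
    have hgrad : ‖gradient f (x + t • u) - gradient f x‖ ≤ L * (t * ‖u‖) := by
      simpa [norm_smul, abs_of_pos ht] using hlip (x + t • u) x
    have := real_inner_le_norm (gradient f (x + t • u) - gradient f x) u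
    nlinarith [norm_nonneg u]
  have hmono : MonotoneOn φ (Set.Ici 0) :=
    monotoneOn_of_hasDerivWithinAt_nonneg (convex_Ici 0)
      (fun t _ => (hφ t).continuousAt.continuousWithinAt)
      (fun t _ => (hφ t).hasDerivWithinAt) hφ'_nonneg
  have h01 : φ 0 ≤ φ 1 := hmono Set.self_mem_Ici (Set.mem_Ici.2 zero_le_one) zero_le_one
  simp only [φ, one_smul, zero_smul, add_zero, u, add_sub_cancel] at h01
  linarith

theorem half_mul_sq_norm_gradient_le_of_perturbed_step (hf : Differentiable ℝ f)
    (hlip : ∀ x y : E, ‖gradient f x - gradient f y‖ ≤ L * ‖x - y‖)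
    {η r : ℝ} (hη : 0 ≤ η) (hηL : η * L ≤ 1) {x v ξ : E} (hξ : ‖ξ‖ ≤ r) :
    η / 2 * ‖gradient f x‖ ^ 2 ≤
      f x - f (x - η • (v - ξ)) + η * (‖v - gradient f x‖ ^ 2 + r ^ 2) := by
  set g := gradient f x
  set u := v - ξ
  have hdescent := le_add_inner_gradient_add_half_mul_sq hf hlip x (x - η • u)
  rw [sub_sub_cancel_left, inner_neg_right, norm_neg, real_inner_smul_right, norm_smul,
    Real.norm_of_nonneg hη] at hdescent
  have hcurv : L / 2 * (η * ‖u‖) ^ 2 ≤ η / 2 * ‖u‖ ^ 2 := by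
    nlinarith [mul_nonneg hη (sq_nonneg ‖u‖)]
  have hexpand : ‖u - g‖ ^ 2 = ‖u‖ ^ 2 - 2 * ⟪g, u⟫_ℝ + ‖g‖ ^ 2 := by
    rw [norm_sub_sq_real, real_inner_comm]
  have hsplit : ‖u - g‖ ≤ ‖v - g‖ + r :=
    calc ‖u - g‖ = ‖(v - g) - ξ‖ := congrArg norm (sub_right_comm v ξ g)
      _ ≤ ‖v - g‖ + ‖ξ‖ := norm_sub_le _ _
      _ ≤ ‖v - g‖ + r := by gcongr
  have hperturb : ‖u - g‖ ^ 2 ≤ 2 * ‖v - g‖ ^ 2 + 2 * r ^ 2 := by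
    nlinarith [norm_nonneg (u - g), sq_nonneg (‖v - g‖ - r)]
  nlinarith

end Descent

theorem sum_range_le_sub_add_sum_of_le_sub_succ {a b F : ℕ → ℝ} {m : ℝ} {N : ℕ}
    (h : ∀ i < N, a i ≤ F i - F (i + 1) + b i) (hm : m ≤ F N) :
    ∑ i ∈ range N, a i ≤ F 0 - m + ∑ i ∈ range N, b i := by
  have := sum_le_sum fun i hi => h i (mem_range.1 hi)
  rw [sum_add_distrib, sum_range_sub'] at this
  linarith

theorem exists_lt_le_mul_sum_range (a : ℕ → ℝ) {N : ℕ} (hN : 1 ≤ N) :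
    ∃ i < N, a i ≤ 1 / (N : ℝ) * ∑ j ∈ range N, a j := by
  have hsum : ∑ i ∈ range N, a i = ∑ _i ∈ range N, 1 / (N : ℝ) * ∑ j ∈ range N, a j := by
    rw [sum_const, card_range, nsmul_eq_mul]
    field_simp
  obtain ⟨i, hi, hle⟩ := exists_le_of_sum_le (nonempty_range_iff.2 (by omega)) hsum.le
  exact ⟨i, mem_range.1 hi, hle⟩

theorem stmt_4_general {d : ℕ} (f : EuclideanSpace ℝ (Fin d) → ℝ) (L : ℝ)
    (hf : Differentiable ℝ f)
    (hlip : ∀ x y : EuclideanSpace ℝ (Fin d),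
      ‖gradient f x - gradient f y‖ ≤ L * ‖x - y‖)
    (fstar : ℝ) (hbelow : ∀ x, fstar ≤ f x)
    (η r : ℝ) (hη : 0 < η) (hηL : η * L ≤ 1) (N : ℕ) (hN : 1 ≤ N)
    (x v ξ : ℕ → EuclideanSpace ℝ (Fin d))
    (hupd : ∀ i < N, x (i + 1) = x i - η • (v i - ξ i))
    (hξ : ∀ i < N, ‖ξ i‖ ≤ r) :
    (1 / (N : ℝ)) * ∑ i ∈ Finset.range N, ‖gradient f (x i)‖ ^ 2 ≤
      2 * (f (x 0) - fstar) / (η * N)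
        + (2 / (N : ℝ)) * ∑ i ∈ Finset.range N, ‖v i - gradient f (x i)‖ ^ 2
        + 2 * r ^ 2
    ∧ ∃ i < N, ‖gradient f (x i)‖ ^ 2 ≤
        2 * (f (x 0) - fstar) / (η * N)
          + (2 / (N : ℝ)) * ∑ i ∈ Finset.range N, ‖v i - gradient f (x i)‖ ^ 2
          + 2 * r ^ 2 := by
  have hstep : ∀ i < N, η / 2 * ‖gradient f (x i)‖ ^ 2 ≤
      f (x i) - f (x (i + 1)) + η * (‖v i - gradient f (x i)‖ ^ 2 + r ^ 2) := fun i hi => by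
    rw [hupd i hi]
    exact half_mul_sq_norm_gradient_le_of_perturbed_step hf hlip hη.le hηL (hξ i hi)
  have htotal := sum_range_le_sub_add_sum_of_le_sub_succ hstep (hbelow (x N))
  simp only [← mul_sum, sum_add_distrib, sum_const, card_range, nsmul_eq_mul, mul_add] at htotal
  have haverage : 1 / (N : ℝ) * ∑ i ∈ range N, ‖gradient f (x i)‖ ^ 2 ≤
      2 * (f (x 0) - fstar) / (η * N)
        + 2 / (N : ℝ) * ∑ i ∈ range N, ‖v i - gradient f (x i)‖ ^ 2 + 2 * r ^ 2 := by
    have hNpos : (0 : ℝ) < N := by exact_mod_cast hN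
    field_simp
    nlinarith
  obtain ⟨i, hi, hle⟩ := exists_lt_le_mul_sum_range (fun i => ‖gradient f (x i)‖ ^ 2) hN
  exact ⟨haverage, i, hi, hle.trans haverage⟩

/-- Average gradient-norm bound along the perturbed update, together with the
existence of an iterate with small gradient. -/
theorem stmt_4 {d : ℕ} (f : EuclideanSpace ℝ (Fin d) → ℝ) (L : ℝ) (hL : 0 ≤ L)
    (hf : Differentiable ℝ f)
    (hlip : ∀ x y : EuclideanSpace ℝ (Fin d),
      ‖gradient f x - gradient f y‖ ≤ L * ‖x - y‖)
    (fstar : ℝ) (hbelow : ∀ x, fstar ≤ f x)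
    (η r : ℝ) (hη : 0 < η) (hηL : η * L ≤ 1) (hr : 0 ≤ r) (N : ℕ) (hN : 1 ≤ N)
    (x v ξ : ℕ → EuclideanSpace ℝ (Fin d))
    (hupd : ∀ i < N, x (i + 1) = x i - η • (v i - ξ i))
    (hξ : ∀ i < N, ‖ξ i‖ ≤ r) :
    (1 / (N : ℝ)) * ∑ i ∈ Finset.range N, ‖gradient f (x i)‖ ^ 2 ≤
      2 * (f (x 0) - fstar) / (η * N)
        + (2 / (N : ℝ)) * ∑ i ∈ Finset.range N, ‖v i - gradient f (x i)‖ ^ 2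
        + 2 * r ^ 2
    ∧ ∃ i < N, ‖gradient f (x i)‖ ^ 2 ≤
        2 * (f (x 0) - fstar) / (η * N)
          + (2 / (N : ℝ)) * ∑ i ∈ Finset.range N, ‖v i - gradient f (x i)‖ ^ 2
          + 2 * r ^ 2 :=
  stmt_4_general f L hf hlip fstar hbelow η r hη hηL N hN x v ξ hupd hξ
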